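/- Let a ≠ 0 and let n₂(a,a) be the Lie algebra structure on ℝ⁷ with nonzero brackets [e₁,e₂] = −a e₅, [e₁,e₃] = −a e₆. Let φ₂ = e^{147}+e^{267}+e^{357}+e^{123}+e^{156}+e^{245}−e^{346}, let τ₂ = a e^{26} − a e^{35}, let λ = 5a², and let D be the diagonal endomorphism −a²·diag(1,1,1,2,2,2,2). Then: (i) dφ₂ = 0; (ii) D is a symmetric derivation of n₂(a,a); (iii) dτ₂ = 2a² e^{123}; and (iv) λφ₂ + L_D φ₂ = 2a² e^{123}. Hence dτ₂ = λφ₂ + L_D φ₂, i.e. (n₂(a,a), φ₂) is an algebraic Laplacian soliton with λ > 0 (expanding), since dτ₂ = Δ_{φ₂} φ₂. -/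

import Mathlib

noncomputable section

/-- `ℝ⁷` with its standard basis. -/
abbrev V7 := Fin 7 → ℝ

/-- `e^{i₁…i_k}`, the wedge of dual-basis covectors, in the determinant convention:
`(e^{i₁}∧…∧e^{i_k})(X₁,…,X_k) = det (Xₚ)_{i_q}`. -/
def wE {k : ℕ} (idx : Fin k → Fin 7) (X : Fin k → V7) : ℝ :=
  Matrix.det (Matrix.of fun p q : Fin k => X p (idx q))

/-- The index in `{0, …, k}` of the `m`-th element (0-based) of `{0, …, k} \ {i, j}`,
assuming `i < j`. -/
def skip2 (i j m : ℕ) : ℕ := if m < i then m else if m < j - 1 then m + 1 else m + 2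

/-- The Chevalley–Eilenberg differential of a `k`-form `ψ` with respect to a bracket `br`:
`dψ(X₁,…,X_{k+1}) = Σ_{i<j} (−1)^{i+j} ψ([Xᵢ,Xⱼ], X₁,…,X̂ᵢ,…,X̂ⱼ,…,X_{k+1})`. -/
def CEd {V : Type*} (br : V → V → V) {k : ℕ} (ψ : (Fin k → V) → ℝ)
    (X : Fin (k + 1) → V) : ℝ :=
  ∑ i : Fin (k + 1), ∑ j : Fin (k + 1),
    if (i : ℕ) < (j : ℕ) then
      (-1 : ℝ) ^ ((i : ℕ) + (j : ℕ)) *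
        ψ (fun l => if (l : ℕ) = 0 then br (X i) (X j)
          else X ⟨min (skip2 (i : ℕ) (j : ℕ) ((l : ℕ) - 1)) k,
            Nat.lt_succ_of_le (Nat.min_le_right _ _)⟩)
    else 0

/-- The algebraic Lie derivative of a `k`-form with respect to an endomorphism `D`:
`(L_D ψ)(X₁,…,X_k) = ψ(DX₁,X₂,…,X_k) + … + ψ(X₁,…,X_{k−1},DX_k)`. -/
def LD {V : Type*} (D : V → V) {k : ℕ} (ψ : (Fin k → V) → ℝ) (X : Fin k → V) : ℝ :=
  ∑ i : Fin k, ψ (Function.update X i (D (X i)))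

/-- The Lie bracket of `n₂(a,a)`: `[e₁,e₂] = −a e₅`, `[e₁,e₃] = −a e₆`. -/
def br2 (a : ℝ) (X Y : V7) : V7 :=
  ![0, 0, 0, 0, -a * (X 0 * Y 1 - X 1 * Y 0), -a * (X 0 * Y 2 - X 2 * Y 0), 0]

/-- `φ₂ = e^{147}+e^{267}+e^{357}+e^{123}+e^{156}+e^{245}−e^{346}`. -/
def phi2 : (Fin 3 → V7) → ℝ := fun X =>
  wE ![0, 3, 6] X + wE ![1, 5, 6] X + wE ![2, 4, 6] X + wE ![0, 1, 2] X
    + wE ![0, 4, 5] X + wE ![1, 3, 4] X - wE ![2, 3, 5] X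

/-- `τ₂ = a e^{26} − a e^{35}`. -/
def tau2 (a : ℝ) : (Fin 2 → V7) → ℝ := fun X =>
  a * wE ![1, 5] X - a * wE ![2, 4] X

/-- `D = −a²·diag(1,1,1,2,2,2,2)`. -/
def D2 (a : ℝ) (X : V7) : V7 :=
  ![-a ^ 2 * X 0, -a ^ 2 * X 1, -a ^ 2 * X 2, -2 * a ^ 2 * X 3, -2 * a ^ 2 * X 4,
    -2 * a ^ 2 * X 5, -2 * a ^ 2 * X 6]

/-! `D` is diagonal, so every `e^{ijk}` is an eigenform of `L_D`, with eigenvalue the sum of the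
corresponding diagonal entries (Leibniz formula): `−5a²` for the six terms of `φ₂` other than
`e^{123}`, and `−3a²` for `e^{123}`. Hence `5a²φ₂ + L_D φ₂ = 2a² e^{123}`, which is also `dτ₂`.
The differentials are direct expansions, the bracket taking values in `span {e₅, e₆}`. -/

theorem CEd_two_apply {V : Type*} (br : V → V → V) (ψ : (Fin 2 → V) → ℝ) (X : Fin 3 → V) :
    CEd br ψ X = -ψ ![br (X 0) (X 1), X 2] + ψ ![br (X 0) (X 2), X 1]
      - ψ ![br (X 1) (X 2), X 0] := by
  simp only [CEd, Fin.sum_univ_succ, Fin.sum_univ_zero]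
  norm_num [sub_eq_add_neg]
  congr! <;> rename_i l <;> fin_cases l <;> rfl

theorem CEd_three_apply {V : Type*} (br : V → V → V) (ψ : (Fin 3 → V) → ℝ) (X : Fin 4 → V) :
    CEd br ψ X = -ψ ![br (X 0) (X 1), X 2, X 3] + ψ ![br (X 0) (X 2), X 1, X 3]
      - ψ ![br (X 0) (X 3), X 1, X 2] - ψ ![br (X 1) (X 2), X 0, X 3]
      + ψ ![br (X 1) (X 3), X 0, X 2] - ψ ![br (X 2) (X 3), X 0, X 1] := by
  simp only [CEd, Fin.sum_univ_succ, Fin.sum_univ_zero]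
  norm_num
  -- regroup as the iterated `Fin.sum_univ_succ` did
  rw [show ∀ a b c d e f : ℝ, -a + b - c - d + e - f = -a + (b + -c) + (-d + e + -f) by
    intros; ring]
  congr! <;> rename_i l <;> fin_cases l <;> rfl

open Matrix in
theorem sum_det_updateRow_mul {n R : Type*} [Fintype n] [DecidableEq n] [CommRing R]
    (M : Matrix n n R) (w : n → R) :
    ∑ i, (M.updateRow i fun j => w j * M i j).det = (∑ j, w j) * M.det := by
  have hrow : ∀ (i : n) (σ : Equiv.Perm n),
      ∏ j, (M.updateRow i fun j => w j * M i j) (σ j) j = w (σ.symm i) * ∏ j, M (σ j) j := by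
    intro i σ
    have hentry : ∀ j, (M.updateRow i fun j => w j * M i j) (σ j) j
        = (if j = σ.symm i then w j else 1) * M (σ j) j := by
      intro j
      by_cases h : j = σ.symm i
      · subst h; simp
      · have hσ : σ j ≠ i := fun h' => h (by rw [← h', Equiv.symm_apply_apply])
        simp [updateRow_ne hσ, h]
    rw [Finset.prod_congr rfl fun j _ => hentry j, Finset.prod_mul_distrib, Finset.prod_ite_eq']
    simp
  simp only [det_apply, hrow, Finset.mul_sum]
  rw [Finset.sum_comm]
  refine Finset.sum_congr rfl fun σ _ => ?_
  simp only [← Finset.smul_sum, ← Finset.sum_mul]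
  rw [Equiv.sum_comp σ.symm w, mul_smul_comm]

theorem LD_wE_of_diagonal {k : ℕ} (c : Fin 7 → ℝ) {D : V7 → V7} (hD : ∀ X j, D X j = c j * X j)
    (idx : Fin k → Fin 7) (X : Fin k → V7) :
    LD D (wE idx) X = (∑ q, c (idx q)) * wE idx X := by
  have hupd : ∀ i, wE idx (Function.update X i (D (X i))) =
      ((Matrix.of fun p q => X p (idx q)).updateRow i fun q => c (idx q) * X i (idx q)).det := by
    intro i
    unfold wE
    congr 1
    ext p q
    rcases eq_or_ne p i with rfl | hp
    · simp [hD]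
    · simp [hp]
  simp only [LD, hupd]
  exact sum_det_updateRow_mul _ _

theorem CEd_br2_phi2 (a : ℝ) : CEd (br2 a) phi2 = fun _ => 0 := by
  funext X
  simp [CEd_three_apply, phi2, wE, Matrix.det_fin_three, br2]
  ring

theorem CEd_br2_tau2 (a : ℝ) : CEd (br2 a) (tau2 a) = fun X => 2 * a ^ 2 * wE ![0, 1, 2] X := by
  funext X
  simp [CEd_two_apply, tau2, wE, Matrix.det_fin_two, Matrix.det_fin_three, br2]
  ring

def D2diag (a : ℝ) : Fin 7 → ℝ :=
  ![-a ^ 2, -a ^ 2, -a ^ 2, -2 * a ^ 2, -2 * a ^ 2, -2 * a ^ 2, -2 * a ^ 2]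

theorem D2_apply (a : ℝ) (X : V7) (j : Fin 7) : D2 a X j = D2diag a j * X j := by
  fin_cases j <;> rfl

theorem LD_D2_phi2 (a : ℝ) (X : Fin 3 → V7) :
    LD (D2 a) phi2 X = -5 * a ^ 2 * phi2 X + 2 * a ^ 2 * wE ![0, 1, 2] X := by
  have hwE := LD_wE_of_diagonal (k := 3) (D2diag a) (D2_apply a)
  simp only [LD, phi2, Finset.sum_add_distrib, Finset.sum_sub_distrib] at hwE ⊢
  simp only [hwE, Fin.sum_univ_three]
  simp [D2diag]
  ring

theorem D2_br2 (a : ℝ) (X Y : V7) : D2 a (br2 a X Y) = br2 a (D2 a X) Y + br2 a X (D2 a Y) := by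
  funext j
  fin_cases j <;> simp [D2, br2] <;> ring

theorem sum_D2_mul_comm (a : ℝ) (X Y : V7) : ∑ i, D2 a X i * Y i = ∑ i, X i * D2 a Y i :=
  Finset.sum_congr rfl fun i _ => by rw [D2_apply, D2_apply]; ring

/-- `(n₂(a,a), φ₂)` is an expanding algebraic Laplacian soliton:
(i) `dφ₂ = 0`; (ii) `D` is a symmetric derivation; (iii) `dτ₂ = 2a² e^{123}`;
(iv) `λφ₂ + L_D φ₂ = 2a² e^{123}` with `λ = 5a²`; hence `dτ₂ = λφ₂ + L_D φ₂` with `λ > 0`. -/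
theorem n2_algebraic_soliton (a : ℝ) (ha : a ≠ 0) :
    (CEd (br2 a) phi2 = fun _ => (0 : ℝ)) ∧
      (∀ X Y : V7, D2 a (br2 a X Y) = br2 a (D2 a X) Y + br2 a X (D2 a Y)) ∧
      (∀ X Y : V7, ∑ i, D2 a X i * Y i = ∑ i, X i * D2 a Y i) ∧
      (CEd (br2 a) (tau2 a) = fun X => 2 * a ^ 2 * wE ![0, 1, 2] X) ∧
      ((fun X => 5 * a ^ 2 * phi2 X + LD (D2 a) phi2 X) =
        fun X => 2 * a ^ 2 * wE ![0, 1, 2] X) ∧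
      (CEd (br2 a) (tau2 a) = fun X => 5 * a ^ 2 * phi2 X + LD (D2 a) phi2 X) ∧
      0 < 5 * a ^ 2 := by
  have hsoliton : (fun X => 5 * a ^ 2 * phi2 X + LD (D2 a) phi2 X) =
      fun X => 2 * a ^ 2 * wE ![0, 1, 2] X := by
    funext X
    rw [LD_D2_phi2]
    ring
  exact ⟨CEd_br2_phi2 a, D2_br2 a, sum_D2_mul_comm a, CEd_br2_tau2 a, hsoliton,
    (CEd_br2_tau2 a).trans hsoliton.symm, by positivity⟩
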